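/- arXiv:2505.24210 — 2 statements merged into one kernel-verified Lean document; each statement's English description precedes it below -/
import Mathlib

section
/- For every integer s ≥ 2, the RKG2 stability polynomial R_s satisfies the second-order consistency conditions R_s(0) = 1, R_s'(0) = 1, and R_s''(0) = 1. -/
/-- The Gegenbauer polynomials with parameter 3/2:
`C_0(x) = 1`, `C_1(x) = 3x`, and
`C_j(x) = ((2j+1)/j)·x·C_{j-1}(x) − ((j+1)/j)·C_{j-2}(x)` for `j ≥ 2`. -/
noncomputable def gegenbauer : ℕ → ℝ → ℝ
  | 0, _ => 1
  | 1, x => 3 * x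
  | (j + 2), x =>
      (2 * ((j : ℝ) + 2) + 1) / ((j : ℝ) + 2) * x * gegenbauer (j + 1) x
        - (((j : ℝ) + 2) + 1) / ((j : ℝ) + 2) * gegenbauer j x

/-- The RKG2 coefficient `b_j = 4(j−1)(j+4)/(3j(j+1)(j+2)(j+3))`. -/
noncomputable def rkg2B (j : ℕ) : ℝ :=
  4 * ((j : ℝ) - 1) * ((j : ℝ) + 4) /
    (3 * (j : ℝ) * ((j : ℝ) + 1) * ((j : ℝ) + 2) * ((j : ℝ) + 3))

/-- The RKG2 coefficient `a_j = 1 − ((j+1)(j+2)/2)·b_j`. -/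
noncomputable def rkg2A (j : ℕ) : ℝ :=
  1 - ((j : ℝ) + 1) * ((j : ℝ) + 2) / 2 * rkg2B j

/-- The RKG2 parameter `w_1 = 6/((s+4)(s−1))`. -/
noncomputable def rkg2W (s : ℕ) : ℝ := 6 / (((s : ℝ) + 4) * ((s : ℝ) - 1))

/-- The RKG2 stability polynomial `R_j(z) = a_j + b_j·C_j(1 + w_1·z)` where `w_1` is built from
the stage number `s`. -/
noncomputable def rkg2R (s j : ℕ) (z : ℝ) : ℝ :=
  rkg2A j + rkg2B j * gegenbauer j (1 + rkg2W s * z)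

/-!
Differentiating the three-term recurrence once and twice and inducting on `j` gives
`C_j(1) = (j+1)(j+2)/2`, `C_j'(1) = j(j+1)(j+2)(j+3)/8` and
`C_j''(1) = (j-1)j(j+1)(j+2)(j+3)(j+4)/48`. Since `R_s^{(k)}(0) = b_s w_1^k C_s^{(k)}(1)` for
`k ≥ 1`, the coefficients `a_s`, `b_s` and `w_1` are exactly those that make the three
conditions hold; `s ≥ 2` keeps the denominators of `b_s` and `w_1` nonzero.
-/

open Polynomial

noncomputable def gegenbauerPoly : ℕ → ℝ[X]
  | 0 => 1
  | 1 => C 3 * X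
  | (j + 2) =>
      C ((2 * ((j : ℝ) + 2) + 1) / ((j : ℝ) + 2)) * X * gegenbauerPoly (j + 1)
        - C ((((j : ℝ) + 2) + 1) / ((j : ℝ) + 2)) * gegenbauerPoly j

theorem eval_gegenbauerPoly (j : ℕ) (x : ℝ) : (gegenbauerPoly j).eval x = gegenbauer j x := by
  induction j using Nat.twoStepInduction with
  | zero => simp [gegenbauer, gegenbauerPoly]
  | one => simp [gegenbauer, gegenbauerPoly]
  | more n ih₀ ih₁ => simp [gegenbauer, gegenbauerPoly, ih₀, ih₁]

theorem eval_one_gegenbauerPoly (j : ℕ) :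
    (gegenbauerPoly j).eval 1 = ((j : ℝ) + 1) * ((j : ℝ) + 2) / 2 := by
  induction j using Nat.twoStepInduction with
  | zero => simp [gegenbauerPoly]
  | one => norm_num [gegenbauerPoly]
  | more n ih₀ ih₁ =>
    simp only [gegenbauerPoly, eval_sub, eval_mul, eval_C, eval_X, ih₀, ih₁]
    push_cast
    field_simp
    ring

theorem eval_one_derivative_gegenbauerPoly (j : ℕ) :
    (gegenbauerPoly j).derivative.eval 1
      = (j : ℝ) * ((j : ℝ) + 1) * ((j : ℝ) + 2) * ((j : ℝ) + 3) / 8 := by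
  induction j using Nat.twoStepInduction with
  | zero => simp [gegenbauerPoly]
  | one => norm_num [gegenbauerPoly]
  | more n ih₀ ih₁ =>
    simp only [gegenbauerPoly, derivative_sub, derivative_mul, derivative_C, derivative_X,
      eval_sub, eval_mul, eval_add, eval_C, eval_X, eval_zero, eval_one, ih₀, ih₁,
      eval_one_gegenbauerPoly]
    push_cast
    field_simp
    ring

theorem eval_one_derivative_derivative_gegenbauerPoly (j : ℕ) :
    (gegenbauerPoly j).derivative.derivative.eval 1
      = ((j : ℝ) - 1) * j * ((j : ℝ) + 1) * ((j : ℝ) + 2) * ((j : ℝ) + 3) * ((j : ℝ) + 4) / 48 := by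
  induction j using Nat.twoStepInduction with
  | zero => simp [gegenbauerPoly]
  | one => simp [gegenbauerPoly]
  | more n ih₀ ih₁ =>
    simp only [gegenbauerPoly, derivative_sub, derivative_mul, derivative_add, derivative_C,
      derivative_X, derivative_zero, derivative_one, eval_sub, eval_mul, eval_add, eval_C, eval_X,
      eval_zero, eval_one, ih₀, ih₁, eval_one_gegenbauerPoly, eval_one_derivative_gegenbauerPoly]
    push_cast
    field_simp
    ring

theorem deriv_eval_affine (p : ℝ[X]) (c w : ℝ) :
    deriv (fun z => p.eval (c + w * z)) = fun z => w * p.derivative.eval (c + w * z) := by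
  funext z
  have h_affine : HasDerivAt (fun z : ℝ => c + w * z) w z := by
    simpa using ((hasDerivAt_id z).const_mul w).const_add c
  exact ((p.hasDerivAt (c + w * z)).comp z h_affine).deriv.trans (mul_comm _ _)

theorem rkg2R_eq_eval_gegenbauerPoly (s j : ℕ) :
    rkg2R s j = fun z => rkg2A j + rkg2B j * (gegenbauerPoly j).eval (1 + rkg2W s * z) := by
  funext z
  rw [rkg2R, eval_gegenbauerPoly]

theorem deriv_rkg2R (s j : ℕ) :
    deriv (rkg2R s j)
      = fun z => rkg2B j * (rkg2W s * (gegenbauerPoly j).derivative.eval (1 + rkg2W s * z)) := by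
  rw [rkg2R_eq_eval_gegenbauerPoly, deriv_const_add', deriv_const_mul_field', deriv_eval_affine]

theorem deriv_deriv_rkg2R (s j : ℕ) :
    deriv (deriv (rkg2R s j)) = fun z => rkg2B j * (rkg2W s *
      (rkg2W s * (gegenbauerPoly j).derivative.derivative.eval (1 + rkg2W s * z))) := by
  rw [deriv_rkg2R, deriv_const_mul_field', deriv_const_mul_field', deriv_eval_affine]

theorem rkg2R_zero (s j : ℕ) : rkg2R s j 0 = 1 := by
  simp only [rkg2R_eq_eval_gegenbauerPoly, mul_zero, add_zero, eval_one_gegenbauerPoly, rkg2A]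
  ring

theorem deriv_rkg2R_zero {s : ℕ} (hs : 2 ≤ s) : deriv (rkg2R s s) 0 = 1 := by
  have hs' : (2 : ℝ) ≤ s := by exact_mod_cast hs
  have hs₁ : (s : ℝ) - 1 ≠ 0 := by linarith
  simp only [deriv_rkg2R, mul_zero, add_zero, eval_one_derivative_gegenbauerPoly, rkg2B, rkg2W]
  field_simp
  ring

theorem deriv_deriv_rkg2R_zero {s : ℕ} (hs : 2 ≤ s) : deriv (deriv (rkg2R s s)) 0 = 1 := by
  have hs' : (2 : ℝ) ≤ s := by exact_mod_cast hs
  have hs₁ : (s : ℝ) - 1 ≠ 0 := by linarith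
  simp only [deriv_deriv_rkg2R, mul_zero, add_zero, eval_one_derivative_derivative_gegenbauerPoly,
    rkg2B, rkg2W]
  field_simp
  ring

/-- For every integer `s ≥ 2`, the RKG2 stability polynomial `R_s` satisfies the second-order
consistency conditions `R_s(0) = 1`, `R_s'(0) = 1`, and `R_s''(0) = 1`. -/
theorem rkg2_second_order_consistency (s : ℕ) (hs : 2 ≤ s) :
    rkg2R s s 0 = 1 ∧ deriv (rkg2R s s) 0 = 1 ∧ deriv (deriv (rkg2R s s)) 0 = 1 :=
  ⟨rkg2R_zero s s, deriv_rkg2R_zero hs, deriv_deriv_rkg2R_zero hs⟩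
end

section
/- Fix an integer s ≥ 2. For every integer j with 4 ≤ j ≤ s and every real z, the RKG2 stability polynomials satisfy the three-term recurrence underlying the Runge–Kutta formulation of RKG2: R_j(z) = μ_j·R_{j−1}(z) + ν_j·R_{j−2}(z) + (1 − μ_j − ν_j) + μ̃_j·z·R_{j−1}(z) + γ̃_j·z, where μ_j = ((2j+1)/j)·(b_j/b_{j−1}), μ̃_j = μ_j·w_1, ν_j = −((j+1)/j)·(b_j/b_{j−2}), and γ̃_j = −μ̃_j·a_{j−1}. -/
/-- The RKG2 recurrence coefficient `μ_j = ((2j+1)/j)·(b_j/b_{j−1})`. -/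
noncomputable def rkg2Mu (j : ℕ) : ℝ :=
  (2 * (j : ℝ) + 1) / (j : ℝ) * (rkg2B j / rkg2B (j - 1))

/-- The RKG2 recurrence coefficient `μ̃_j = μ_j·w_1`. -/
noncomputable def rkg2MuTilde (s j : ℕ) : ℝ := rkg2Mu j * rkg2W s

/-- The RKG2 recurrence coefficient `ν_j = −((j+1)/j)·(b_j/b_{j−2})`. -/
noncomputable def rkg2Nu (j : ℕ) : ℝ :=
  -(((j : ℝ) + 1) / (j : ℝ) * (rkg2B j / rkg2B (j - 2)))

/-- The RKG2 recurrence coefficient `γ̃_j = −μ̃_j·a_{j−1}`. -/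
noncomputable def rkg2GammaTilde (s j : ℕ) : ℝ := -(rkg2MuTilde s j * rkg2A (j - 1))

/-!
Since `C_j(1) = (j+1)(j+2)/2`, the coefficient `a_j` equals `1 - b_j C_j(1)`, so
`R_j(z) = 1 + b_j (C_j(1 + w_1 z) - C_j(1))`. The coefficients are chosen so that
`μ_j b_{j-1} = ((2j+1)/j) b_j` and `ν_j b_{j-2} = -((j+1)/j) b_j`; the recurrence for `R_j` is
then the difference of the Gegenbauer recurrence at `1 + w_1 z` and at `1`.
-/

theorem gegenbauer_of_two_le {n : ℕ} (hn : 2 ≤ n) (x : ℝ) :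
    gegenbauer n x = (2 * (n : ℝ) + 1) / n * x * gegenbauer (n - 1) x
      - ((n : ℝ) + 1) / n * gegenbauer (n - 2) x := by
  obtain ⟨k, rfl⟩ : ∃ k, n = k + 2 := ⟨n - 2, by omega⟩
  rw [gegenbauer]
  push_cast
  rfl

theorem gegenbauer_one (n : ℕ) : gegenbauer n 1 = ((n : ℝ) + 1) * ((n : ℝ) + 2) / 2 := by
  induction n using Nat.twoStepInduction with
  | zero => norm_num [gegenbauer]
  | one => norm_num [gegenbauer]
  | more k ih₀ ih₁ =>
    rw [gegenbauer, ih₀, ih₁]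
    push_cast
    field_simp
    ring

theorem rkg2A_eq_one_sub_rkg2B_mul (j : ℕ) : rkg2A j = 1 - rkg2B j * gegenbauer j 1 := by
  rw [rkg2A, gegenbauer_one]
  ring

theorem rkg2B_pos {j : ℕ} (hj : 2 ≤ j) : 0 < rkg2B j := by
  have hj' : (0 : ℝ) < j - 1 := by
    have : (2 : ℝ) ≤ j := by exact_mod_cast hj
    linarith
  exact div_pos (mul_pos (mul_pos four_pos hj') (by positivity)) (by positivity)

theorem rkg2Mu_mul_rkg2B {j : ℕ} (hj : 3 ≤ j) :
    rkg2Mu j * rkg2B (j - 1) = (2 * (j : ℝ) + 1) / j * rkg2B j := by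
  rw [rkg2Mu, mul_assoc, div_mul_cancel₀ _ (rkg2B_pos (by omega)).ne']

theorem rkg2Nu_mul_rkg2B {j : ℕ} (hj : 4 ≤ j) :
    rkg2Nu j * rkg2B (j - 2) = -(((j : ℝ) + 1) / j * rkg2B j) := by
  rw [rkg2Nu, neg_mul, mul_assoc, div_mul_cancel₀ _ (rkg2B_pos (by omega)).ne']

theorem rkg2_three_term_recurrence_general (s : ℕ) (j : ℕ) (hj₁ : 4 ≤ j)
    (z : ℝ) :
    rkg2R s j z =
      rkg2Mu j * rkg2R s (j - 1) z + rkg2Nu j * rkg2R s (j - 2) z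
        + (1 - rkg2Mu j - rkg2Nu j) + rkg2MuTilde s j * z * rkg2R s (j - 1) z
        + rkg2GammaTilde s j * z := by
  set x := 1 + rkg2W s * z with hx
  have hμ := rkg2Mu_mul_rkg2B (by omega : 3 ≤ j)
  have hν := rkg2Nu_mul_rkg2B hj₁
  have hCx := gegenbauer_of_two_le (by omega : 2 ≤ j) x
  have hC1 := gegenbauer_of_two_le (by omega : 2 ≤ j) 1
  simp only [rkg2R, rkg2MuTilde, rkg2GammaTilde, rkg2A_eq_one_sub_rkg2B_mul, ← hx]
  linear_combination rkg2B j * (hCx - hC1)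
    - (x * gegenbauer (j - 1) x - gegenbauer (j - 1) 1) * hμ
    - (gegenbauer (j - 2) x - gegenbauer (j - 2) 1) * hν

/-- Fix an integer `s ≥ 2`. For every integer `j` with `4 ≤ j ≤ s` and every real `z`,
the RKG2 stability polynomials satisfy the three-term recurrence underlying the Runge–Kutta
formulation of RKG2:
`R_j(z) = μ_j·R_{j−1}(z) + ν_j·R_{j−2}(z) + (1 − μ_j − ν_j) + μ̃_j·z·R_{j−1}(z) + γ̃_j·z`. -/
theorem rkg2_three_term_recurrence (s : ℕ) (hs : 2 ≤ s) (j : ℕ) (hj₁ : 4 ≤ j) (hj₂ : j ≤ s)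
    (z : ℝ) :
    rkg2R s j z =
      rkg2Mu j * rkg2R s (j - 1) z + rkg2Nu j * rkg2R s (j - 2) z
        + (1 - rkg2Mu j - rkg2Nu j) + rkg2MuTilde s j * z * rkg2R s (j - 1) z
        + rkg2GammaTilde s j * z :=
  rkg2_three_term_recurrence_general s j hj₁ z
end
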